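/- Let G be a cofinitary group, r ∈ 2^ω, and (s,E) a condition of Z_G(r). Then: (1) if n ∉ dom(s), then for all but finitely many m ∈ ℕ the pair (s ∪ {(n,m)}, E) is a condition of Z_G(r) extending (s,E); (2) if m ∉ ran(s), then for all but finitely many n ∈ ℕ the pair (s ∪ {(n,m)}, E) is a condition of Z_G(r) extending (s,E). -/

import Mathlib

noncomputable section

/-- Permutations of the natural numbers (elements of `S_∞`). -/
abbrev Perm' := Equiv.Perm ℕ

/-- A letter of a word over `G ∪ {x, x⁻¹}`: either a group element (of `S_∞`),
or `Sum.inr true` standing for `x`, or `Sum.inr false` standing for `x⁻¹`. -/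
abbrev Letter := Perm' ⊕ Bool

/-- A word is a list of letters, written left to right
(the leftmost letter is applied last). -/
abbrev Word := List Letter

/-- A subgroup of `S_∞` is cofinitary if every non-identity element
has only finitely many fixed points. -/
def Cofinitary (G : Subgroup Perm') : Prop :=
  ∀ g ∈ G, g ≠ 1 → {n : ℕ | g n = n}.Finite

/-- A set of pairs is a partial injection (functional and injective). -/
def PartInj (s : Set (ℕ × ℕ)) : Prop :=
  (∀ ⦃a b c⦄, (a, b) ∈ s → (a, c) ∈ s → b = c) ∧
  (∀ ⦃a b c⦄, (a, c) ∈ s → (b, c) ∈ s → a = b)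

/-- Domain of a partial injection given as a set of pairs. -/
def pdom (s : Set (ℕ × ℕ)) : Set ℕ := Prod.fst '' s

/-- Range of a partial injection given as a set of pairs. -/
def pran (s : Set (ℕ × ℕ)) : Set ℕ := Prod.snd '' s

/-- The relation given by substituting the partial injection `s` for `x`
(and `s⁻¹` for `x⁻¹`) in a single letter. -/
def letterRel (s : Set (ℕ × ℕ)) : Letter → ℕ → ℕ → Prop
  | Sum.inl g => fun a b => g a = b
  | Sum.inr true => fun a b => (a, b) ∈ s
  | Sum.inr false => fun a b => (b, a) ∈ s

/-- The relation `w[s]`: evaluation of a word at the partial injection `s`,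
composing the letter relations (rightmost letter applied first). -/
def wordRel (s : Set (ℕ × ℕ)) : Word → ℕ → ℕ → Prop
  | [] => fun a b => a = b
  | l :: w => fun a b => ∃ c, wordRel s w a c ∧ letterRel s l c b

/-- `fix(w[s])`, the set of fixed points of the partial injection `w[s]`. -/
def wordFix (s : Set (ℕ × ℕ)) (w : Word) : Set ℕ := {n | wordRel s w n n}

/-- The word `x^k` for an integer `k` (for `k < 0`, `|k|` copies of `x⁻¹`). -/
def xpow (k : ℤ) : Word :=
  if 0 ≤ k then List.replicate k.toNat (Sum.inr true : Letter)
  else List.replicate (-k).toNat (Sum.inr false : Letter)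

/-- The block `g x^k` as a word. -/
def blockWord (p : Perm' × ℤ) : Word := Sum.inl p.1 :: xpow p.2

/-- `w` is a nice word (member of `W*_G`): `w = x^{k₀}` with `k₀ > 0`, or
`w = g_l x^{k_l} ⋯ g₁ x^{k₁} g₀ x^{k₀}` with `k₀ > 0`, all `k_i ≠ 0` and all
`g_i ∈ G \ {id}`. -/
def IsNice (G : Subgroup Perm') (w : Word) : Prop :=
  (∃ k : ℕ, 0 < k ∧ w = xpow (k : ℤ)) ∨
  (∃ bs : List (Perm' × ℤ), bs ≠ [] ∧
    (∀ p ∈ bs, p.1 ∈ G ∧ p.1 ≠ 1 ∧ p.2 ≠ 0) ∧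
    (∃ p, bs.getLast? = some p ∧ 0 < p.2) ∧
    w = (bs.map blockWord).flatten)

/-- The number of occurrences of `x` or `x⁻¹` in a word. -/
def xOccurrences (w : Word) : ℕ := w.countP (fun l => l.isRight)

/-- `w ∈ W¹_G`: a nice word with exactly one occurrence of `x` or `x⁻¹`. -/
def IsNiceOne (G : Subgroup Perm') (w : Word) : Prop :=
  IsNice G w ∧ xOccurrences w = 1

/-- `(s, E)` is a condition of Zhang's forcing `Z_G`: `s` is a finite partial
injection and `E` a finite set of nice words. -/
def ZCond (G : Subgroup Perm') (s : Set (ℕ × ℕ)) (E : Set Word) : Prop :=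
  s.Finite ∧ PartInj s ∧ E.Finite ∧ ∀ w ∈ E, IsNice G w

/-- `(t, F) ≤ (s, E)` in Zhang's forcing: `s ⊆ t`, `E ⊆ F`, and
`fix(w[t]) = fix(w[s])` for every `w ∈ E`. -/
def ZLe (t : Set (ℕ × ℕ)) (F : Set Word) (s : Set (ℕ × ℕ)) (E : Set Word) : Prop :=
  s ⊆ t ∧ E ⊆ F ∧ ∀ w ∈ E, wordFix t w = wordFix s w

/-- An injective tree: a nonempty set of finite sequences closed under initial
segments, all of whose elements are injective sequences. -/
def IsInjTree (T : Set (List ℕ)) : Prop :=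
  T.Nonempty ∧ (∀ t ∈ T, ∀ s : List ℕ, s <+: t → s ∈ T) ∧ ∀ t ∈ T, t.Nodup

/-- `T ∈ I_i(P)⁺`: an injective tree such that for every `s ∈ T` and every
finite `P₀ ⊆ P` there are `t ∈ T` extending `s` and `k ∈ dom(t) \ dom(s)` with
`t(k) ≠ f(k)` for all `f ∈ P₀`. -/
def TreePos (P : Set Perm') (T : Set (List ℕ)) : Prop :=
  IsInjTree T ∧
  ∀ s ∈ T, ∀ P₀ ⊆ P, P₀.Finite →
    ∃ t ∈ T, s <+: t ∧ ∃ k, s.length ≤ k ∧ k < t.length ∧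
      ∀ f ∈ P₀, t.getD k 0 ≠ f k

/-- A set `O` is closed under a relation `R` and its inverse. -/
def RelClosed (R : ℕ → ℕ → Prop) (O : Set ℕ) : Prop :=
  ∀ a b, R a b → (a ∈ O ↔ b ∈ O)

/-- The orbit of `n` under the (partial injective) relation `R`: the smallest
set containing `n` closed under applications of `R` and `R⁻¹`. -/
def relOrbit (R : ℕ → ℕ → Prop) (n : ℕ) : Set ℕ :=
  ⋂₀ {O : Set ℕ | n ∈ O ∧ RelClosed R O}

/-- The set of all orbits of the relation `R`. -/
def relOrbits (R : ℕ → ℕ → Prop) : Set (Set ℕ) := {O | ∃ n, O = relOrbit R n}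

/-- Domain of a relation. -/
def relDom (R : ℕ → ℕ → Prop) : Set ℕ := {a | ∃ b, R a b}

/-- Range of a relation. -/
def relRan (R : ℕ → ℕ → Prop) : Set ℕ := {b | ∃ a, R a b}

/-- The set of closed orbits of `R`: those orbits contained in `dom ∩ ran`. -/
def relClosedOrbits (R : ℕ → ℕ → Prop) : Set (Set ℕ) :=
  {O ∈ relOrbits R | O ⊆ relDom R ∩ relRan R}

/-- The relation of a partial injection given as a set of pairs. -/
def sRel (s : Set (ℕ × ℕ)) : ℕ → ℕ → Prop := fun a b => (a, b) ∈ s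

/-- The relation (graph) of a permutation of `ℕ`. -/
def permRel (f : Perm') : ℕ → ℕ → Prop := fun a b => f a = b

/-- A partial injection `s` is nice: every closed orbit has its minimum below
the minimum of the complement of the union of all closed orbits. -/
def NiceInj (s : Set (ℕ × ℕ)) : Prop :=
  ∀ O ∈ relClosedOrbits (sRel s),
    sInf O < sInf {n : ℕ | n ∉ ⋃₀ relClosedOrbits (sRel s)}

/-- The position of a closed orbit `O` of `s` in the well-order of closed
orbits by their minima. -/
def orbitIndex (s : Set (ℕ × ℕ)) (O : Set ℕ) : ℕ :=
  {P ∈ relClosedOrbits (sRel s) | sInf P < sInf O}.ncard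

/-- `s` codes `r`, i.e. `o_s ⊆ r`: the `n`-th closed orbit (in the well-order
by minima) has cardinality congruent to `r(n)` mod 2. -/
def CodesReal (s : Set (ℕ × ℕ)) (r : ℕ → Fin 2) : Prop :=
  ∀ O ∈ relClosedOrbits (sRel s), O.ncard % 2 = (r (orbitIndex s O) : ℕ)

/-- `(s, E)` is a condition of `Z_G(r)`. -/
def ZrCond (G : Subgroup Perm') (r : ℕ → Fin 2)
    (s : Set (ℕ × ℕ)) (E : Set Word) : Prop :=
  ZCond G s E ∧ NiceInj s ∧ CodesReal s r

/-- The `n`-th prime. -/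
def pPrime (n : ℕ) : ℕ := Nat.nth Nat.Prime n

/-- The orbit-coding function `o†`: `o†(n)` is the number of closed orbits of
`R` of cardinality `p_n`, modulo 2. -/
def odag (R : ℕ → ℕ → Prop) (n : ℕ) : ℕ :=
  {O ∈ relClosedOrbits R | O.ncard = pPrime n}.ncard % 2

/-- `v^k`: the word `v` concatenated `k` times. -/
def wpow (v : Word) (k : ℕ) : Word := (List.replicate k v).flatten

/-- `w ∈ W†_G`: a nice word that is indecomposable, i.e. not of the form `v^k`
for a nice word `v` and `k > 1`. -/
def Indecomposable (G : Subgroup Perm') (w : Word) : Prop :=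
  IsNice G w ∧ ¬∃ v : Word, IsNice G v ∧ ∃ k : ℕ, 1 < k ∧ w = wpow v k

/-- The inverse of a letter. -/
def letterInv : Letter → Letter
  | Sum.inl g => Sum.inl g⁻¹
  | Sum.inr b => Sum.inr (!b)

/-- The inverse of a word. -/
def wordInv (w : Word) : Word := (w.map letterInv).reverse

/-- `E` is closed under cyclic permutations and inverses thereof within `W*_G`. -/
def CyclClosed (G : Subgroup Perm') (E : Set Word) : Prop :=
  ∀ w ∈ E, ∀ w₀ w₁ : Word, w = w₀ ++ w₁ →
    (IsNice G (w₁ ++ w₀) → w₁ ++ w₀ ∈ E) ∧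
    (IsNice G (wordInv (w₁ ++ w₀)) → wordInv (w₁ ++ w₀) ∈ E)

/-- `(s, E)` is a condition of `Z†_G(r)`: a Zhang condition such that `E` is
closed under cyclic permutations and inverses thereof in `W*_G`, and whenever
`w = v^k ∈ E` with `v ∈ W†_G` then `v^l ∈ E` for all `0 < l ≤ k` and `o†_{v[s]}`
codes `r` up to `n` for every `n` with `p_n ≤ k`. -/
def ZdagCond (G : Subgroup Perm') (r : ℕ → Fin 2)
    (s : Set (ℕ × ℕ)) (E : Set Word) : Prop :=
  ZCond G s E ∧ CyclClosed G E ∧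
  ∀ w ∈ E, ∀ v : Word, ∀ k : ℕ, Indecomposable G v → w = wpow v k →
    (∀ l : ℕ, 0 < l → l ≤ k → wpow v l ∈ E) ∧
    (∀ n : ℕ, pPrime n ≤ k → ∀ i ≤ n, odag (wordRel s v) i = (r i : ℕ))

/-- Substituting the permutation `f` for `x` in a letter. -/
def letterPerm (f : Perm') : Letter → Perm'
  | Sum.inl g => g
  | Sum.inr true => f
  | Sum.inr false => f⁻¹

/-- `w[f]`: evaluation of a word at the permutation `f`. -/
def wordPerm (f : Perm') (w : Word) : Perm' := (w.map (letterPerm f)).prod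

/-- Two functions are eventually different. -/
def EvDiff (f g : ℕ → ℕ) : Prop := {k : ℕ | f k = g k}.Finite

/-- A set of permutations is an eventually different family. -/
def EDFamily (P : Set Perm') : Prop :=
  ∀ f ∈ P, ∀ g ∈ P, f ≠ g → EvDiff f g

/-!
Adding a pair `(ν, μ)` with `μ` outside a finite set changes nothing that a condition of
`Z_G(r)` records. The new edge only creates a non-closed orbit through `ν` and `μ`, so the closed
orbits of `s`, and with them niceness and the coded real, are unchanged. For the fixed points,
take `μ` such that `μ` and its images under `g` and `g⁻¹`, for the finitely many `g` occurring in
words of `E`, lie outside `dom s ∪ ran s ∪ {ν}`, and no such `g` fixes `μ` (this is where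
cofinitarity enters). In a nice word group letters alternate with nonempty blocks `x^k`, so a
path of `w[s ∪ {(ν, μ)}]` can read at most one letter after reaching `μ`, and since nice words
are cyclically reduced a closed path cannot start at `μ` either. Hence closed paths avoid `μ`
and `fix(w[s ∪ {(ν, μ)}]) = fix(w[s])`. The range case is the domain case for `s⁻¹` and the
word with `x` and `x⁻¹` exchanged.
-/

section Pairs

variable {s : Set (ℕ × ℕ)}

lemma mem_pdom {a : ℕ} : a ∈ pdom s ↔ ∃ b, (a, b) ∈ s :=
  ⟨by rintro ⟨⟨_, b⟩, hp, rfl⟩; exact ⟨b, hp⟩, fun ⟨_, hb⟩ => ⟨_, hb, rfl⟩⟩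

lemma mem_pran {b : ℕ} : b ∈ pran s ↔ ∃ a, (a, b) ∈ s :=
  ⟨by rintro ⟨⟨a, _⟩, hp, rfl⟩; exact ⟨a, hp⟩, fun ⟨_, ha⟩ => ⟨_, ha, rfl⟩⟩

lemma pdom_insert (a b : ℕ) : pdom (insert (a, b) s) = insert a (pdom s) :=
  Set.image_insert_eq

lemma pran_insert (a b : ℕ) : pran (insert (a, b) s) = insert b (pran s) :=
  Set.image_insert_eq

def psupp (s : Set (ℕ × ℕ)) : Set ℕ := pdom s ∪ pran s

lemma psupp_insert (a b : ℕ) : psupp (insert (a, b) s) = insert a (insert b (psupp s)) := by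
  ext
  simp only [psupp, pdom_insert, pran_insert, Set.mem_union, Set.mem_insert_iff]
  tauto

lemma PartInj.insert (hs : PartInj s) {a b : ℕ} (ha : a ∉ pdom s) (hb : b ∉ pran s) :
    PartInj (insert (a, b) s) := by
  refine ⟨fun x y z hy hz => ?_, fun x y z hx hy => ?_⟩
  · rcases hy with hy | hy <;> rcases hz with hz | hz
    · rw [(Prod.mk.inj hy).2, (Prod.mk.inj hz).2]
    · exact absurd (mem_pdom.2 ⟨z, (Prod.mk.inj hy).1 ▸ hz⟩) ha
    · exact absurd (mem_pdom.2 ⟨y, (Prod.mk.inj hz).1 ▸ hy⟩) ha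
    · exact hs.1 hy hz
  · rcases hx with hx | hx <;> rcases hy with hy | hy
    · rw [(Prod.mk.inj hx).1, (Prod.mk.inj hy).1]
    · exact absurd (mem_pran.2 ⟨y, (Prod.mk.inj hx).2 ▸ hy⟩) hb
    · exact absurd (mem_pran.2 ⟨x, (Prod.mk.inj hy).2 ▸ hx⟩) hb
    · exact hs.2 hx hy

end Pairs

section Orbits

variable {R R' : ℕ → ℕ → Prop}

lemma mem_relOrbit_self (R : ℕ → ℕ → Prop) (n : ℕ) : n ∈ relOrbit R n :=
  Set.mem_sInter.2 fun _ hO => hO.1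

lemma relClosed_relOrbit (R : ℕ → ℕ → Prop) (n : ℕ) : RelClosed R (relOrbit R n) :=
  fun a b hab => by
    simp only [relOrbit, Set.mem_sInter]
    exact forall₂_congr fun O hO => hO.2 a b hab

lemma relOrbit_subset {n : ℕ} {O : Set ℕ} (hn : n ∈ O) (hO : RelClosed R O) :
    relOrbit R n ⊆ O :=
  Set.sInter_subset_of_mem ⟨hn, hO⟩

lemma RelClosed.mono {O : Set ℕ} (hR : ∀ a b, R a b → R' a b) (hO : RelClosed R' O) :
    RelClosed R O :=
  fun a b hab => hO a b (hR a b hab)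

lemma relOrbit_mono (hR : ∀ a b, R a b → R' a b) (n : ℕ) : relOrbit R n ⊆ relOrbit R' n :=
  relOrbit_subset (mem_relOrbit_self R' n) ((relClosed_relOrbit R' n).mono hR)

lemma relDom_sRel (s : Set (ℕ × ℕ)) : relDom (sRel s) = pdom s := by
  ext; simp [relDom, sRel, mem_pdom]

lemma relRan_sRel (s : Set (ℕ × ℕ)) : relRan (sRel s) = pran s := by
  ext; simp [relRan, sRel, mem_pran]

variable {s : Set (ℕ × ℕ)} {ν μ : ℕ}

lemma relClosed_insert {O : Set ℕ} (hO : RelClosed (sRel s) O) (hν : ν ∉ O) (hμ : μ ∉ O) :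
    RelClosed (sRel (insert (ν, μ) s)) O := by
  rintro a b (hab | hab)
  · simp only [Prod.mk.injEq] at hab
    rw [hab.1, hab.2]
    exact iff_of_false hν hμ
  · exact hO a b hab

lemma relOrbit_subset_insert (p : ℕ × ℕ) (n : ℕ) :
    relOrbit (sRel s) n ⊆ relOrbit (sRel (insert p s)) n :=
  relOrbit_mono (fun _ _ h => Set.mem_insert_of_mem _ h) n

lemma relOrbit_insert {n : ℕ} (hν : ν ∉ relOrbit (sRel s) n) (hμ : μ ∉ relOrbit (sRel s) n) :
    relOrbit (sRel (insert (ν, μ) s)) n = relOrbit (sRel s) n :=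
  (relOrbit_subset (mem_relOrbit_self _ n)
    (relClosed_insert (relClosed_relOrbit _ n) hν hμ)).antisymm (relOrbit_subset_insert _ n)

lemma mem_relClosedOrbits_sRel {O : Set ℕ} :
    O ∈ relClosedOrbits (sRel s) ↔ (∃ n, O = relOrbit (sRel s) n) ∧ O ⊆ pdom s ∩ pran s := by
  rw [relClosedOrbits, relDom_sRel, relRan_sRel]
  rfl

lemma notMem_of_mem_relClosedOrbits_insert (hμν : μ ≠ ν) (hfree : μ ∉ pdom s ∨ ν ∉ pran s)
    {O : Set ℕ} (hO : O ∈ relClosedOrbits (sRel (insert (ν, μ) s))) : ν ∉ O ∧ μ ∉ O := by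
  obtain ⟨⟨n, rfl⟩, hsub⟩ := mem_relClosedOrbits_sRel.1 hO
  rw [pdom_insert, pran_insert] at hsub
  have hνμ := relClosed_relOrbit (sRel (insert (ν, μ) s)) n ν μ (Set.mem_insert _ _)
  suffices hνO : ν ∉ relOrbit (sRel (insert (ν, μ) s)) n from ⟨hνO, hνμ.not.1 hνO⟩
  intro h
  obtain ⟨⟨-, hνr⟩, hμd, -⟩ := And.intro (hsub h) (hsub (hνμ.1 h))
  rcases hfree with hf | hf
  · exact hμd.elim hμν hf
  · exact hνr.elim (Ne.symm hμν) hf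

/-- The new edge lies in an orbit containing `ν` and `μ`, which `hfree` keeps from being closed. -/
lemma relClosedOrbits_insert (hν : ν ∉ pdom s) (hμ : μ ∉ pran s) (hμν : μ ≠ ν)
    (hfree : μ ∉ pdom s ∨ ν ∉ pran s) :
    relClosedOrbits (sRel (insert (ν, μ) s)) = relClosedOrbits (sRel s) := by
  ext O
  constructor
  · intro hO
    obtain ⟨hνO, hμO⟩ := notMem_of_mem_relClosedOrbits_insert hμν hfree hO
    obtain ⟨⟨n, rfl⟩, hsub⟩ := mem_relClosedOrbits_sRel.1 hO
    have hsn := relOrbit_subset_insert (s := s) (ν, μ) n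
    have heq := relOrbit_insert (fun h => hνO (hsn h)) (fun h => hμO (hsn h))
    rw [heq, pdom_insert, pran_insert] at hsub
    rw [heq] at hνO hμO ⊢
    refine mem_relClosedOrbits_sRel.2 ⟨⟨n, rfl⟩, fun x hx => ⟨?_, ?_⟩⟩
    · exact (hsub hx).1.resolve_left fun h => hνO (h ▸ hx)
    · exact (hsub hx).2.resolve_left fun h => hμO (h ▸ hx)
  · intro hO
    obtain ⟨⟨n, rfl⟩, hsub⟩ := mem_relClosedOrbits_sRel.1 hO
    have heq := relOrbit_insert (fun h => hν (hsub h).1) (fun h => hμ (hsub h).2)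
    refine mem_relClosedOrbits_sRel.2 ⟨⟨n, heq.symm⟩, ?_⟩
    rw [pdom_insert, pran_insert]
    exact fun x hx => ⟨Or.inr (hsub hx).1, Or.inr (hsub hx).2⟩

end Orbits

section Words

variable {s t : Set (ℕ × ℕ)}

lemma letterRel_mono (h : s ⊆ t) : ∀ (l : Letter) {a b : ℕ}, letterRel s l a b → letterRel t l a b
  | Sum.inl _, _, _, hl => hl
  | Sum.inr true, _, _, hl => h hl
  | Sum.inr false, _, _, hl => h hl

lemma wordRel_mono (h : s ⊆ t) : ∀ (w : Word) {a b : ℕ}, wordRel s w a b → wordRel t w a b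
  | [], _, _, hw => hw
  | l :: w, _, _, ⟨c, hc, hl⟩ => ⟨c, wordRel_mono h w hc, letterRel_mono h l hl⟩

lemma letterRel_inr_mem_psupp {b : Bool} {p q : ℕ} (h : letterRel s (Sum.inr b) p q) :
    p ∈ psupp s ∧ q ∈ psupp s := by
  cases b
  · exact ⟨Or.inr (mem_pran.2 ⟨q, h⟩), Or.inl (mem_pdom.2 ⟨p, h⟩)⟩
  · exact ⟨Or.inl (mem_pdom.2 ⟨q, h⟩), Or.inr (mem_pran.2 ⟨p, h⟩)⟩

lemma exists_letterRel_of_getLast? {l : Letter} :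
    ∀ {w : Word} {a c : ℕ}, wordRel s w a c → w.getLast? = some l → ∃ c', letterRel s l a c'
  | [_], _, c, ⟨_, rfl, hl⟩, hw => by
    obtain rfl : _ = l := by simpa using hw
    exact ⟨c, hl⟩
  | _ :: _ :: _, _, _, ⟨_, hw, _⟩, hlast =>
    exists_letterRel_of_getLast? hw (by rwa [List.getLast?_cons_cons] at hlast)

/-- The letters that may stand side by side, `l` left of `l'`, in a nice word. -/
def ReducedAdj : Letter → Letter → Prop
  | Sum.inl _, Sum.inl _ => False
  | Sum.inr b, Sum.inr b' => b = b'
  | _, _ => True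

def CyclicallyReduced (w : Word) : Prop :=
  w.IsChain ReducedAdj ∧ ∀ l ∈ w.getLast?, ∀ l' ∈ w.head?, ReducedAdj l l'

lemma xpow_of_ne_zero {k : ℤ} (hk : k ≠ 0) :
    xpow k = List.replicate k.natAbs (Sum.inr (decide (0 < k))) := by
  unfold xpow
  split_ifs with h
  · rw [show k.toNat = k.natAbs by omega, decide_eq_true (lt_of_le_of_ne h (Ne.symm hk))]
  · rw [show (-k).toNat = k.natAbs by omega, decide_eq_false (by omega)]

lemma blockWord_of_ne_zero {p : Perm' × ℤ} (hp : p.2 ≠ 0) :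
    blockWord p = Sum.inl p.1 :: List.replicate p.2.natAbs (Sum.inr (decide (0 < p.2))) := by
  rw [blockWord, xpow_of_ne_zero hp]

lemma blockWord_getLast? {p : Perm' × ℤ} (hp : p.2 ≠ 0) :
    (blockWord p).getLast? = some (Sum.inr (decide (0 < p.2))) := by
  rw [blockWord_of_ne_zero hp, List.getLast?_cons, List.getLast?_replicate, if_neg (by omega)]
  rfl

lemma isChain_blockWord {p : Perm' × ℤ} (hp : p.2 ≠ 0) : (blockWord p).IsChain ReducedAdj := by
  rw [blockWord_of_ne_zero hp, List.isChain_cons]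
  refine ⟨fun y hy => ?_, List.isChain_replicate_of_rel _ rfl⟩
  rw [List.head?_replicate, if_neg (by omega)] at hy
  cases hy
  trivial

lemma isChain_flatten_blockWord {bs : List (Perm' × ℤ)} (hbs : ∀ p ∈ bs, p.2 ≠ 0) :
    (bs.map blockWord).flatten.IsChain ReducedAdj := by
  rw [List.isChain_flatten (by simp [blockWord]), List.isChain_map]
  refine ⟨fun l hl => ?_, (List.pairwise_of_forall_mem_list fun p hp q _ => ?_).isChain⟩
  · obtain ⟨p, hp, rfl⟩ := List.mem_map.1 hl
    exact isChain_blockWord (hbs p hp)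
  · intro x hx y hy
    rw [blockWord_getLast? (hbs p hp), Option.mem_some_iff] at hx
    rw [blockWord, List.head?_cons, Option.mem_some_iff] at hy
    subst hx hy
    trivial

variable {G : Subgroup Perm'} {w : Word}

lemma IsNice.getLast? (hw : IsNice G w) : w.getLast? = some (Sum.inr true) := by
  rcases hw with ⟨k, hk, rfl⟩ | ⟨bs, -, hbs, ⟨p, hp, hp0⟩, rfl⟩
  · rw [xpow_of_ne_zero (by omega), List.getLast?_replicate, if_neg (by omega)]
    simp [hk]
  · obtain ⟨bs, rfl⟩ := List.getLast?_eq_some_iff.1 hp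
    rw [List.map_append, List.flatten_append,
      List.getLast?_append_of_ne_nil _ (by simp [blockWord]), List.map_singleton,
      List.flatten_singleton, blockWord_getLast? hp0.ne', decide_eq_true hp0]

lemma IsNice.head?_ne (hw : IsNice G w) : w.head? ≠ some (Sum.inr false) := by
  rcases hw with ⟨k, hk, rfl⟩ | ⟨bs, hbs, -, -, rfl⟩
  · rw [xpow_of_ne_zero (by omega), List.head?_replicate, if_neg (by omega)]
    simp [hk]
  · obtain ⟨p, bs, rfl⟩ := List.exists_cons_of_ne_nil hbs
    simp [blockWord]

lemma IsNice.cyclicallyReduced (hw : IsNice G w) : CyclicallyReduced w := by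
  refine ⟨?_, ?_⟩
  · rcases hw with ⟨k, hk, rfl⟩ | ⟨bs, -, hbs, -, rfl⟩
    · rw [xpow_of_ne_zero (by omega)]
      exact List.isChain_replicate_of_rel _ rfl
    · exact isChain_flatten_blockWord fun p hp => (hbs p hp).2.2
  · intro l hl l' hl'
    rw [hw.getLast?, Option.mem_some_iff] at hl
    rw [Option.mem_def] at hl'
    subst hl
    rcases l' with _ | _ | _
    exacts [trivial, absurd hl' hw.head?_ne, rfl]

lemma IsNice.mem_of_inl_mem (hw : IsNice G w) {g : Perm'} (hg : Sum.inl g ∈ w) :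
    g ∈ G ∧ g ≠ 1 := by
  rcases hw with ⟨k, hk, rfl⟩ | ⟨bs, -, hbs, -, rfl⟩
  · rw [xpow_of_ne_zero (by omega)] at hg
    simp at hg
  · obtain ⟨_, hl, hgp⟩ := List.mem_flatten.1 hg
    obtain ⟨p, hp, rfl⟩ := List.mem_map.1 hl
    rw [blockWord_of_ne_zero (hbs p hp).2.2] at hgp
    obtain rfl : g = p.1 := by simpa using hgp
    exact ⟨(hbs p hp).1, (hbs p hp).2.1⟩

end Words

section Fresh

def IsFresh (B : Set ℕ) (Gs : Set Perm') (μ : ℕ) : Prop :=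
  μ ∉ B ∧ ∀ g ∈ Gs, g μ ∉ B ∧ g⁻¹ μ ∉ B ∧ g μ ≠ μ

lemma finite_setOf_not_isFresh {B : Set ℕ} {Gs : Set Perm'} (hB : B.Finite) (hGs : Gs.Finite)
    (hfix : ∀ g ∈ Gs, {n : ℕ | g n = n}.Finite) : {μ | ¬ IsFresh B Gs μ}.Finite := by
  refine (hB.union (hGs.biUnion fun g hg => ((hB.preimage g.injective.injOn).union
    (hB.preimage (g⁻¹).injective.injOn)).union (hfix g hg))).subset fun μ hμ => ?_
  simp only [IsFresh, not_and_or, not_forall, not_not] at hμ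
  rcases hμ with hμ | ⟨g, hg, hgμ | hgμ | hgμ⟩
  exacts [Or.inl hμ, Or.inr (Set.mem_biUnion hg (Or.inl (Or.inl hgμ))),
    Or.inr (Set.mem_biUnion hg (Or.inl (Or.inr hgμ))), Or.inr (Set.mem_biUnion hg (Or.inr hgμ))]

variable {s : Set (ℕ × ℕ)} {ν μ : ℕ} {Gs : Set Perm'}

lemma IsFresh.ne_notMem_pdom_notMem_pran (hμ : IsFresh (insert ν (psupp s)) Gs μ) :
    μ ≠ ν ∧ μ ∉ pdom s ∧ μ ∉ pran s := by
  simpa [psupp, not_or] using hμ.1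

lemma IsFresh.notMem_pdom_insert (hμ : IsFresh (insert ν (psupp s)) Gs μ) :
    μ ∉ pdom (insert (ν, μ) s) := by
  rw [pdom_insert, Set.mem_insert_iff, not_or]
  exact ⟨hμ.ne_notMem_pdom_notMem_pran.1, hμ.ne_notMem_pdom_notMem_pran.2.1⟩

lemma IsFresh.apply_notMem_psupp_insert (hμ : IsFresh (insert ν (psupp s)) Gs μ) {g : Perm'}
    (hg : g ∈ Gs) : g μ ∉ psupp (insert (ν, μ) s) := by
  rw [psupp_insert, Set.insert_comm]
  exact fun h => (hμ.2 g hg).1 ((Set.mem_insert_iff.1 h).resolve_left (hμ.2 g hg).2.2)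

/-- The three ways in which a path of `w[s ∪ {(ν, μ)}]` from `a` can end at `c`: away from `μ`,
and along `s` unless it started at `μ`; at `μ` after the new edge; at `g μ` right after that. -/
def FreshPathState (s : Set (ℕ × ℕ)) (ν μ : ℕ) (Gs : Set Perm') (w : Word) (a c : ℕ) : Prop :=
  (c ≠ μ ∧ (∀ b, w.head? = some (Sum.inr b) → c ∈ insert ν (psupp s)) ∧
      (a ≠ μ → wordRel s w a c)) ∨
    (c = μ ∧ w.head? = some (Sum.inr true)) ∨
    ∃ g ∈ Gs, c = g μ ∧ w.head? = some (Sum.inl g)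

lemma freshPathState_cons_inr_of_wordRel (hμ : IsFresh (insert ν (psupp s)) Gs μ) {w : Word}
    {b : Bool} {a c₀ c : ℕ} (hstart : a ≠ μ → wordRel s w a c₀ ∧ c₀ ≠ μ)
    (hl : letterRel (insert (ν, μ) s) (Sum.inr b) c₀ c) :
    FreshPathState s ν μ Gs (Sum.inr b :: w) a c := by
  obtain ⟨hμν, hμd, hμr⟩ := hμ.ne_notMem_pdom_notMem_pran
  cases b <;> rcases hl with hl | hl
  · obtain ⟨rfl, rfl⟩ := Prod.mk.inj hl
    exact Or.inl ⟨Ne.symm hμν, fun _ _ => Set.mem_insert _ _,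
      fun ha => absurd rfl (hstart ha).2⟩
  · have hc : c ∈ pdom s := mem_pdom.2 ⟨c₀, hl⟩
    exact Or.inl ⟨ne_of_mem_of_not_mem hc hμd, fun _ _ => Set.mem_insert_of_mem _ (Or.inl hc),
      fun ha => ⟨c₀, (hstart ha).1, hl⟩⟩
  · obtain ⟨rfl, rfl⟩ := Prod.mk.inj hl
    exact Or.inr (Or.inl ⟨rfl, rfl⟩)
  · have hc : c ∈ pran s := mem_pran.2 ⟨c₀, hl⟩
    exact Or.inl ⟨ne_of_mem_of_not_mem hc hμr, fun _ _ => Set.mem_insert_of_mem _ (Or.inr hc),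
      fun ha => ⟨c₀, (hstart ha).1, hl⟩⟩

/-- After `μ` or `g μ` no letter `x^{±1}` can be read. -/
lemma FreshPathState.cons_inr (hμ : IsFresh (insert ν (psupp s)) Gs μ) {w : Word} {b : Bool}
    {a c₀ c : ℕ} (hw : (Sum.inr b :: w).IsChain ReducedAdj)
    (hst : FreshPathState s ν μ Gs w a c₀)
    (hl : letterRel (insert (ν, μ) s) (Sum.inr b) c₀ c) :
    FreshPathState s ν μ Gs (Sum.inr b :: w) a c := by
  rcases hst with ⟨hc₀, -, hs⟩ | ⟨rfl, hhead⟩ | ⟨g, hg, rfl, -⟩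
  · exact freshPathState_cons_inr_of_wordRel hμ (fun ha => ⟨hs ha, hc₀⟩) hl
  · obtain rfl : b = true := List.isChain_cons.1 hw |>.1 _ hhead
    exact absurd (mem_pdom.2 ⟨c, hl⟩) hμ.notMem_pdom_insert
  · exact absurd (letterRel_inr_mem_psupp hl).1 (hμ.apply_notMem_psupp_insert hg)

/-- A group letter cannot follow `g μ`, and cannot lead to `μ` from `g⁻¹ μ`, which lies outside
`dom s ∪ ran s ∪ {ν}` while every point reached by a letter `x^{±1}` lies inside. -/
lemma FreshPathState.cons_inl (hμ : IsFresh (insert ν (psupp s)) Gs μ) {w : Word} {g : Perm'}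
    {a c₀ : ℕ} (hw : (Sum.inl g :: w).IsChain ReducedAdj) (hne : w ≠ []) (hg : g ∈ Gs)
    (hst : FreshPathState s ν μ Gs w a c₀) :
    FreshPathState s ν μ Gs (Sum.inl g :: w) a (g c₀) := by
  obtain ⟨l, w, rfl⟩ := List.exists_cons_of_ne_nil hne
  have hadj : ReducedAdj (Sum.inl g) l := (List.isChain_cons_cons.1 hw).1
  rcases hst with ⟨-, hc₀, hs⟩ | ⟨rfl, -⟩ | ⟨g', -, -, hhead⟩
  · refine Or.inl ⟨fun h => ?_, fun _ h => (nomatch h), fun ha => ⟨c₀, hs ha, rfl⟩⟩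
    rcases l with _ | b
    · exact hadj
    · refine (hμ.2 g hg).2.1 ?_
      rw [Equiv.Perm.inv_eq_iff_eq.2 h.symm]
      exact hc₀ b rfl
  · exact Or.inr (Or.inr ⟨g, hg, rfl, rfl⟩)
  · cases hhead
    exact hadj.elim

lemma freshPathState_of_wordRel (hμ : IsFresh (insert ν (psupp s)) Gs μ) :
    ∀ {w : Word} {b : Bool} {a c : ℕ}, w.IsChain ReducedAdj → w.getLast? = some (Sum.inr b) →
      (∀ g, Sum.inl g ∈ w → g ∈ Gs) → wordRel (insert (ν, μ) s) w a c →
      FreshPathState s ν μ Gs w a c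
  | [_], _, _, _, _, hlast, _, ⟨_, rfl, hl⟩ => by
    obtain rfl := Option.some.inj hlast
    exact freshPathState_cons_inr_of_wordRel hμ (fun ha => ⟨rfl, ha⟩) hl
  | Sum.inr _ :: l :: w, _, _, _, hw, hlast, hG, ⟨_, hst, hl⟩ =>
    (freshPathState_of_wordRel hμ hw.tail hlast (fun g hg => hG g (.tail _ hg)) hst).cons_inr
      hμ hw hl
  | Sum.inl g :: l :: w, _, _, _, hw, hlast, hG, ⟨_, hst, rfl⟩ =>
    (freshPathState_of_wordRel hμ hw.tail hlast (fun g hg => hG g (.tail _ hg)) hst).cons_inl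
      hμ hw (List.cons_ne_nil _ _) (hG g (.head _))

theorem wordFix_insert_of_isFresh (hμ : IsFresh (insert ν (psupp s)) Gs μ) {w : Word}
    {b : Bool} (hw : CyclicallyReduced w) (hlast : w.getLast? = some (Sum.inr b))
    (hG : ∀ g, Sum.inl g ∈ w → g ∈ Gs) : wordFix (insert (ν, μ) s) w = wordFix s w := by
  refine Set.Subset.antisymm (fun a ha => ?_) fun a => wordRel_mono (Set.subset_insert _ _) w
  obtain ⟨c, hc⟩ := exists_letterRel_of_getLast? ha hlast
  rcases freshPathState_of_wordRel hμ hw.1 hlast hG ha with ⟨haμ, -, hs⟩ | ⟨rfl, hhead⟩ |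
    ⟨g, hg, rfl, -⟩
  · exact hs haμ
  · cases b
    · exact absurd (hw.2 _ hlast _ hhead) Bool.false_ne_true
    · exact absurd (mem_pdom.2 ⟨c, hc⟩) hμ.notMem_pdom_insert
  · exact absurd (letterRel_inr_mem_psupp hc).1 (hμ.apply_notMem_psupp_insert hg)

end Fresh

section Swap

variable {s : Set (ℕ × ℕ)}

lemma letterRel_swap (l : Letter) {a b : ℕ} :
    letterRel (Prod.swap ⁻¹' s) (Sum.map id not l) a b ↔ letterRel s l a b := by
  rcases l with _ | _ | _ <;> rfl

lemma wordRel_swap : ∀ (w : Word) {a b : ℕ},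
    wordRel (Prod.swap ⁻¹' s) (w.map (Sum.map id not)) a b ↔ wordRel s w a b
  | [], _, _ => Iff.rfl
  | l :: w, _, _ => exists_congr fun _ => and_congr (wordRel_swap w) (letterRel_swap l)

lemma wordFix_swap (w : Word) :
    wordFix (Prod.swap ⁻¹' s) (w.map (Sum.map id not)) = wordFix s w :=
  Set.ext fun _ => wordRel_swap w

lemma psupp_swap : psupp (Prod.swap ⁻¹' s) = psupp s := by
  rw [psupp, psupp, pdom, pran, ← Set.image_swap_eq_preimage_swap, Set.image_image,
    Set.image_image, Set.union_comm]
  rfl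

lemma preimage_swap_insert (a b : ℕ) :
    Prod.swap ⁻¹' insert (a, b) s = insert (b, a) (Prod.swap ⁻¹' s) := by
  rw [← Set.image_swap_eq_preimage_swap, Set.image_insert_eq, Set.image_swap_eq_preimage_swap]
  rfl

lemma reducedAdj_swap {l l' : Letter} :
    ReducedAdj (Sum.map id not l) (Sum.map id not l') ↔ ReducedAdj l l' := by
  rcases l with _ | _ | _ <;> rcases l' with _ | _ | _ <;> simp [ReducedAdj]

lemma CyclicallyReduced.swap {w : Word} (hw : CyclicallyReduced w) :
    CyclicallyReduced (w.map (Sum.map id not)) := by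
  refine ⟨List.isChain_map _ |>.2 (hw.1.imp fun _ _ => reducedAdj_swap.2), ?_⟩
  simp only [List.getLast?_map, List.head?_map, Option.mem_map]
  rintro _ ⟨l, hl, rfl⟩ _ ⟨l', hl', rfl⟩
  exact reducedAdj_swap.2 (hw.2 l hl l' hl')

variable {ν μ : ℕ} {Gs : Set Perm'}

theorem wordFix_insert_of_isFresh' (hμ : IsFresh (insert ν (psupp s)) Gs μ) {w : Word} {b : Bool}
    (hw : CyclicallyReduced w) (hlast : w.getLast? = some (Sum.inr b))
    (hG : ∀ g, Sum.inl g ∈ w → g ∈ Gs) : wordFix (insert (μ, ν) s) w = wordFix s w := by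
  rw [← wordFix_swap, preimage_swap_insert, ← wordFix_swap (s := s)]
  refine wordFix_insert_of_isFresh (psupp_swap ▸ hμ) hw.swap (b := !b) ?_ fun g hg => hG g ?_
  · simp [hlast]
  · simpa using hg

end Swap

section Extension

variable {G : Subgroup Perm'} {r : ℕ → Fin 2} {s : Set (ℕ × ℕ)} {E : Set Word}

lemma niceInj_congr {s t : Set (ℕ × ℕ)}
    (h : relClosedOrbits (sRel t) = relClosedOrbits (sRel s)) : NiceInj t ↔ NiceInj s := by
  rw [NiceInj, NiceInj, h]

lemma codesReal_congr {s t : Set (ℕ × ℕ)}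
    (h : relClosedOrbits (sRel t) = relClosedOrbits (sRel s)) : CodesReal t r ↔ CodesReal s r := by
  simp only [CodesReal, orbitIndex, h]

lemma ZrCond.insert (hc : ZrCond G r s E) {n m : ℕ} (hn : n ∉ pdom s) (hm : m ∉ pran s)
    (hmn : m ≠ n) (hfree : m ∉ pdom s ∨ n ∉ pran s)
    (hfix : ∀ w ∈ E, wordFix (insert (n, m) s) w = wordFix s w) :
    ZrCond G r (insert (n, m) s) E ∧ ZLe (insert (n, m) s) E s E := by
  obtain ⟨⟨hsfin, hsinj, hEfin, hEnice⟩, hnice, hcode⟩ := hc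
  have horb := relClosedOrbits_insert hn hm hmn hfree
  exact ⟨⟨⟨hsfin.insert _, hsinj.insert hn hm, hEfin, hEnice⟩, (niceInj_congr horb).2 hnice,
    (codesReal_congr horb).2 hcode⟩, Set.subset_insert _ _, subset_rfl, hfix⟩

def groupLetters (E : Set Word) : Set Perm' := {g | ∃ w ∈ E, Sum.inl g ∈ w}

lemma finite_setOf_not_isFresh_of_zCond (hG : Cofinitary G) (hc : ZCond G s E) (ν : ℕ) :
    {μ | ¬ IsFresh (insert ν (psupp s)) (groupLetters E) μ}.Finite := by
  obtain ⟨hsfin, -, hEfin, hEnice⟩ := hc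
  refine finite_setOf_not_isFresh (((hsfin.image _).union (hsfin.image _)).insert ν) ?_ ?_
  · refine (hEfin.biUnion fun w _ => w.finite_toSet.preimage Sum.inl_injective.injOn).subset ?_
    rintro g ⟨w, hw, hg⟩
    exact Set.mem_biUnion hw hg
  · rintro g ⟨w, hw, hg⟩
    exact hG g (hEnice w hw |>.mem_of_inl_mem hg).1 (hEnice w hw |>.mem_of_inl_mem hg).2

end Extension

/-- Domain and range extension for the coding forcing `Z_G(r)`. -/
theorem statement5 (G : Subgroup Perm') (hG : Cofinitary G) (r : ℕ → Fin 2)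
    (s : Set (ℕ × ℕ)) (E : Set Word) (hc : ZrCond G r s E) :
    (∀ n : ℕ, n ∉ pdom s →
      {m : ℕ | ¬ (ZrCond G r (insert (n, m) s) E ∧
        ZLe (insert (n, m) s) E s E)}.Finite) ∧
    (∀ m : ℕ, m ∉ pran s →
      {n : ℕ | ¬ (ZrCond G r (insert (n, m) s) E ∧
        ZLe (insert (n, m) s) E s E)}.Finite) := by
  have hnice : ∀ w ∈ E, IsNice G w := hc.1.2.2.2
  have hfin := finite_setOf_not_isFresh_of_zCond hG hc.1
  refine ⟨fun n hn => (hfin n).subset fun m hm hfresh => hm ?_,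
    fun m hm => (hfin m).subset fun n hn hfresh => hn ?_⟩
  · obtain ⟨hmn, hmd, hmr⟩ := hfresh.ne_notMem_pdom_notMem_pran
    exact hc.insert hn hmr hmn (Or.inl hmd) fun w hw =>
      wordFix_insert_of_isFresh hfresh (hnice w hw).cyclicallyReduced (hnice w hw).getLast?
        fun g hg => ⟨w, hw, hg⟩
  · obtain ⟨hnm, hnd, hnr⟩ := hfresh.ne_notMem_pdom_notMem_pran
    exact hc.insert hnd hm (Ne.symm hnm) (Or.inr hnr) fun w hw =>
      wordFix_insert_of_isFresh' hfresh (hnice w hw).cyclicallyReduced (hnice w hw).getLast?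
        fun g hg => ⟨w, hw, hg⟩

end
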